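/- arXiv:1408.0328 — 2 statements merged into one kernel-verified Lean document; each statement's English description precedes it below -/
import Mathlib

section
/- Let Δ = (w₁, …, wₙ) be an arbitrary vector of real weights and, for x ∈ ℝⁿ and y ∈ ℝ, define the OWA penalty P(x, y) = Σ_{i=1}^{n} wᵢ · Sᵢ((x₁ − y)², …, (xₙ − y)²), where Sᵢ(r) denotes the i-th smallest component of the vector r. Then for every a ∈ ℝ and every x ∈ ℝⁿ, a real number μ minimizes y ↦ P(x, y) if and only if μ + a minimizes y ↦ P(x + a·𝟙, y); hence the associated OWA regression operator (the infimum of the minimizers) is shift-invariant for any choice of the weight vector Δ. -/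
/- Shifting the data and the evaluation point by the same `a` leaves every residual `xⱼ - y`
unchanged, so `P(x + a·𝟙, ·)` is `P(x, ·)` translated by `a`; translation carries minimizers to minimizers and
commutes with taking infima. -/

/-- The OWA penalty: `P(x, y) = Σᵢ wᵢ · Sᵢ((x₁ − y)², …, (xₙ − y)²)`, where `Sᵢ(r)` is the
`i`-th smallest component of `r` (here realised via the sorting permutation `Tuple.sort`). -/
noncomputable def owaPenalty (n : ℕ) (w : Fin n → ℝ) (x : Fin n → ℝ) (y : ℝ) : ℝ :=
  ∑ i : Fin n,
    w i * ((fun j => (x j - y) ^ 2) ∘ Tuple.sort (fun j => (x j - y) ^ 2)) i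

lemma owaPenalty_add_const (n : ℕ) (w : Fin n → ℝ) (x : Fin n → ℝ) (a z : ℝ) :
    owaPenalty n w (fun i => x i + a) z = owaPenalty n w x (z - a) := by
  have residuals : (fun j => (x j + a - z) ^ 2) = fun j => (x j - (z - a)) ^ 2 := by
    funext j; ring
  simp only [owaPenalty, residuals]

section Translation

variable {G β : Type*} [AddGroup G] [LE β]

lemma forall_le_comp_sub_iff (f : G → β) (a : G) (b : β) :
    (∀ y, b ≤ f (y - a)) ↔ ∀ y, b ≤ f y :=
  (Equiv.subRight a).forall_congr fun _ => Iff.rfl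

lemma setOf_isMinimizer_comp_sub (f : G → β) (a : G) :
    {μ | ∀ y, f (μ - a) ≤ f (y - a)} = (· + a) '' {μ | ∀ y, f μ ≤ f y} := by
  ext μ
  simp only [Set.image_add_right, Set.mem_preimage, Set.mem_ofPred_eq, ← sub_eq_add_neg,
    forall_le_comp_sub_iff]

end Translation

lemma csInf_image_add_const {α : Type*} [ConditionallyCompleteLattice α] [AddGroup α]
    [AddRightMono α] {s : Set α} (hne : s.Nonempty) (hbdd : BddBelow s) (a : α) :
    sInf ((· + a) '' s) = sInf s + a :=
  ((OrderIso.addRight a).map_csInf' hne hbdd).symm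

/-- For any weight vector `Δ = (w₁, …, wₙ)`, a value `μ` minimizes the OWA
penalty `y ↦ P(x, y)` iff `μ + a` minimizes `y ↦ P(x + a·𝟙, y)`; hence the associated OWA
regression operator (the infimum of the minimizers) is shift-invariant. -/
theorem owa_regression_shift_invariant (n : ℕ) (w : Fin n → ℝ) :
    (∀ (x : Fin n → ℝ) (a μ : ℝ),
      (∀ y, owaPenalty n w x μ ≤ owaPenalty n w x y) ↔
        (∀ y, owaPenalty n w (fun i => x i + a) (μ + a) ≤
          owaPenalty n w (fun i => x i + a) y)) ∧
    (∀ (x : Fin n → ℝ) (a : ℝ),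
      {μ : ℝ | ∀ y, owaPenalty n w x μ ≤ owaPenalty n w x y}.Nonempty →
      BddBelow {μ : ℝ | ∀ y, owaPenalty n w x μ ≤ owaPenalty n w x y} →
      sInf {μ : ℝ | ∀ y, owaPenalty n w (fun i => x i + a) μ ≤
          owaPenalty n w (fun i => x i + a) y} =
        sInf {μ : ℝ | ∀ y, owaPenalty n w x μ ≤ owaPenalty n w x y} + a) := by
  refine ⟨fun x a μ => ?_, fun x a hne hbdd => ?_⟩
  · simp only [owaPenalty_add_const, add_sub_cancel_right, forall_le_comp_sub_iff]
  · simp only [owaPenalty_add_const]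
    rw [setOf_isMinimizer_comp_sub (owaPenalty n w x), csInf_image_add_const hne hbdd]
end

section
/- Let q < −1 and let n ≥ 1 satisfy n ≤ 1 + ((q+1)/(q−1))^{q−1} (equivalently, with p = |q| > 1, n ≤ 1 + ((p+1)/(p−1))^{p+1}). Then the Lehmer mean L_q of n arguments is weakly monotone on (0,∞)ⁿ: for every x ∈ (0,∞)ⁿ and every a > 0, L_q(x + a·𝟙) ≥ L_q(x), where 𝟙 = (1,1,…,1). -/
/-!
Translating all arguments by `t` and writing `A, B, C` for the sums of `(xᵢ + t)` to the powers
`q + 1, q, q - 1`, one has `A' = (q + 1) B` and `B' = q C`, so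
`(A / B)' = ((q + 1) B² - q A C) / B² = (B² + (-q) (A C - B²)) / B²`.
By Cauchy–Schwarz `B² ≤ A C`, so for `q ≤ 0` the derivative is nonnegative.
-/

open Finset

noncomputable def lehmerMean {ι : Type*} [Fintype ι] (q : ℝ) (x : ι → ℝ) : ℝ :=
  (∑ i, x i ^ (q + 1)) / ∑ i, x i ^ q

section

variable {ι : Type*} [Fintype ι]

lemma sq_sum_rpow_le_sum_rpow_add_one_mul_sum_rpow_sub_one (q : ℝ) {y : ι → ℝ}
    (hy : ∀ i, 0 < y i) :
    (∑ i, y i ^ q) ^ 2 ≤ (∑ i, y i ^ (q + 1)) * ∑ i, y i ^ (q - 1) := by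
  refine sum_sq_le_sum_mul_sum_of_sq_le_mul univ (fun i _ => Real.rpow_nonneg (hy i).le _)
    (fun i _ => Real.rpow_nonneg (hy i).le _) fun i _ => le_of_eq ?_
  rw [← Real.rpow_add (hy i), ← Real.rpow_natCast, ← Real.rpow_mul (hy i).le]
  ring_nf

lemma hasDerivAt_sum_rpow_add (p : ℝ) {x : ι → ℝ} {t : ℝ} (h : ∀ i, x i + t ≠ 0) :
    HasDerivAt (fun s => ∑ i, (x i + s) ^ p) (p * ∑ i, (x i + t) ^ (p - 1)) t := by
  rw [mul_sum]
  refine HasDerivAt.fun_sum fun i _ => ?_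
  simpa using ((hasDerivAt_id t).const_add (x i)).rpow_const (p := p) (Or.inl (h i))

lemma hasDerivAt_lehmerMean_add (q : ℝ) {x : ι → ℝ} {t : ℝ} (h : ∀ i, x i + t ≠ 0)
    (hB : ∑ i, (x i + t) ^ q ≠ 0) :
    HasDerivAt (fun s => lehmerMean q fun i => x i + s)
      (((q + 1) * (∑ i, (x i + t) ^ q) ^ 2
          - q * (∑ i, (x i + t) ^ (q + 1)) * ∑ i, (x i + t) ^ (q - 1))
        / (∑ i, (x i + t) ^ q) ^ 2) t := by
  refine ((hasDerivAt_sum_rpow_add (q + 1) h).div (hasDerivAt_sum_rpow_add q h) hB).congr_deriv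
    ?_
  rw [add_sub_cancel_right]
  ring

lemma lehmerMean_deriv_numerator_nonneg {q : ℝ} (hq : q ≤ 0) {y : ι → ℝ} (hy : ∀ i, 0 < y i) :
    0 ≤ (q + 1) * (∑ i, y i ^ q) ^ 2 - q * (∑ i, y i ^ (q + 1)) * ∑ i, y i ^ (q - 1) := by
  have hCS := sq_sum_rpow_le_sum_rpow_add_one_mul_sum_rpow_sub_one q hy
  calc 0 ≤ (∑ i, y i ^ q) ^ 2 + (-q) * ((∑ i, y i ^ (q + 1)) * (∑ i, y i ^ (q - 1))
          - (∑ i, y i ^ q) ^ 2) :=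
        add_nonneg (sq_nonneg _) (mul_nonneg (neg_nonneg.2 hq) (sub_nonneg.2 hCS))
    _ = _ := by ring

lemma monotoneOn_lehmerMean_add {q : ℝ} (hq : q ≤ 0) {x : ι → ℝ} (hx : ∀ i, 0 < x i) :
    MonotoneOn (fun t => lehmerMean q fun i => x i + t) (Set.Ici 0) := by
  rcases isEmpty_or_nonempty ι with _ | _
  · intro s _ t _ _
    simp [lehmerMean]
  have hpos : ∀ t ∈ Set.Ici (0 : ℝ), ∀ i, 0 < x i + t := fun t ht i =>
    add_pos_of_pos_of_nonneg (hx i) ht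
  have hderiv : ∀ t ∈ Set.Ici (0 : ℝ), HasDerivAt (fun s => lehmerMean q fun i => x i + s)
      (((q + 1) * (∑ i, (x i + t) ^ q) ^ 2
          - q * (∑ i, (x i + t) ^ (q + 1)) * ∑ i, (x i + t) ^ (q - 1))
        / (∑ i, (x i + t) ^ q) ^ 2) t := fun t ht =>
    hasDerivAt_lehmerMean_add q (fun i => (hpos t ht i).ne')
      (sum_pos (fun i _ => Real.rpow_pos_of_pos (hpos t ht i) q) univ_nonempty).ne'
  refine monotoneOn_of_hasDerivWithinAt_nonneg (convex_Ici 0)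
    (fun t ht => (hderiv t ht).continuousAt.continuousWithinAt)
    (fun t ht => (hderiv t (interior_subset ht)).hasDerivWithinAt) fun t ht => ?_
  exact div_nonneg (lehmerMean_deriv_numerator_nonneg hq (hpos t (interior_subset ht)))
    (sq_nonneg _)

lemma lehmerMean_le_lehmerMean_add {q : ℝ} (hq : q ≤ 0) {x : ι → ℝ} (hx : ∀ i, 0 < x i)
    {a : ℝ} (ha : 0 ≤ a) : lehmerMean q x ≤ lehmerMean q fun i => x i + a := by
  simpa using monotoneOn_lehmerMean_add hq hx Set.self_mem_Ici ha ha

end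

theorem lehmer_weakly_monotone_neg_general (q : ℝ) (hq : q < -1) (n : ℕ) :
    ∀ (x : Fin n → ℝ) (a : ℝ), (∀ i, 0 < x i) → 0 < a →
      (∑ i, x i ^ (q + 1)) / (∑ i, x i ^ q) ≤
        (∑ i, (x i + a) ^ (q + 1)) / (∑ i, (x i + a) ^ q) :=
  fun _ _ hx ha => lehmerMean_le_lehmerMean_add (by linarith) hx ha.le

/-- For `q < −1` and `n ≥ 1` with `n ≤ 1 + ((q+1)/(q−1))^(q−1)`, the Lehmer
mean `L_q(x) = (Σᵢ xᵢ^(q+1))/(Σᵢ xᵢ^q)` of `n` arguments is weakly monotone on `(0,∞)ⁿ`: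
`L_q(x + a·𝟙) ≥ L_q(x)` for every `x ∈ (0,∞)ⁿ` and `a > 0`. -/
theorem lehmer_weakly_monotone_neg (q : ℝ) (hq : q < -1) (n : ℕ) (hn : 1 ≤ n)
    (hnq : (n : ℝ) ≤ 1 + ((q + 1) / (q - 1)) ^ (q - 1)) :
    ∀ (x : Fin n → ℝ) (a : ℝ), (∀ i, 0 < x i) → 0 < a →
      (∑ i, x i ^ (q + 1)) / (∑ i, x i ^ q) ≤
        (∑ i, (x i + a) ^ (q + 1)) / (∑ i, (x i + a) ^ q) :=
  lehmer_weakly_monotone_neg_general q hq n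
end
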